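/- Let a, b and n > 3 be positive integers, let k be a field, and let I_2(Y) ⊆ k[x_1,…,x_n] be the ideal generated by the binomials x_{j+1}·x_k^b − x_j^b·x_{k+1} for 1 ≤ j < k ≤ n-1. Then I_2(Y) is saturated with respect to every variable: for every m ∈ {1,…,n}, every e ≥ 0 and every f ∈ k[x_1,…,x_n], if x_m^e·f ∈ I_2(Y) then f ∈ I_2(Y). -/

import Mathlib

/-- The ℓ-th repunit in base `b`: `r_b(ℓ) = ∑_{j=0}^{ℓ-1} b^j`, with `r_b(0) = 0`. -/
def rep (b ℓ : ℕ) : ℕ := ∑ j ∈ Finset.range ℓ, b ^ j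

/-- The variable `x_m` (1-indexed, `1 ≤ m ≤ n`) of `K[x_1, …, x_n]`. -/
noncomputable def xv (K : Type*) [Field K] (n m : ℕ) : MvPolynomial (Fin n) K :=
  if h : m - 1 < n then MvPolynomial.X ⟨m - 1, h⟩ else 0

/-- The set of 2×2 minors of the matrix `Y` with rows `(x_1^b, …, x_{n-1}^b)` and
`(x_2, …, x_n)`, i.e. the binomials `x_{j+1}·x_l^b − x_j^b·x_{l+1}` for `1 ≤ j < l ≤ n-1`. -/
def minorsY (K : Type*) [Field K] (b n : ℕ) : Set (MvPolynomial (Fin n) K) :=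
  { f | ∃ j l : ℕ, 1 ≤ j ∧ j < l ∧ l ≤ n - 1 ∧
      f = xv K n (j + 1) * xv K n l ^ b - xv K n j ^ b * xv K n (l + 1) }

/-!
The ideal `I = I₂(Y)` is the kernel of the `K`-algebra map `x_{i+1} ↦ s·t^{r_b(i)}` into
`K[s, t]`, so it is prime, and it does not contain the variable `x_m`; saturation follows.

Only `I ⊇ ker` needs work. Modulo the minors, `x_i^b·x_j` may be replaced by
`x_{i+1}·x_{j-1}^b` whenever `j ≥ i + 2`, so every polynomial is congruent to a combination of
standard monomials, those divisible by no such `x_i^b·x_j`. A standard monomial is determined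
by its image `s^p·t^q`: since `r_b(i+1) = b·r_b(i) + 1`, removing `x_1` (exponent `u₀`) turns
`(p, q)` into `(p - u₀, q')` with `q + u₀ = b·q' + p`. Either `q' = 0` and `u₀ = p - q`, or
the monomial involves some `x_j` with `j ≥ 3`, whence `u₀ < b` is read off modulo `b`.
Which case occurs is decided by `q ≤ p`.
-/

open MvPolynomial

lemma rep_zero (b : ℕ) : rep b 0 = 0 := rfl

lemma rep_succ (b ℓ : ℕ) : rep b (ℓ + 1) = b * rep b ℓ + 1 := by
  simp [rep, Finset.sum_range_succ', pow_succ', Finset.mul_sum]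

lemma xv_succ {K : Type*} [Field K] {n : ℕ} (i : Fin n) : xv K n (i + 1) = X i := by
  simp [xv]

lemma pow_add_mul_pow_lt_mul_pow_add_pow {B b i k : ℕ} (hB : b + 1 < B) (hik : i < k) :
    B ^ (i + 1) + b * B ^ k < b * B ^ i + B ^ (k + 1) := calc
  B ^ (i + 1) + b * B ^ k ≤ (b + 1) * B ^ k := by
    have : B ^ (i + 1) ≤ B ^ k := Nat.pow_le_pow_right (by omega) hik
    linarith
  _ < B * B ^ k := Nat.mul_lt_mul_of_pos_right hB (pow_pos (by omega) k)
  _ ≤ b * B ^ i + B ^ (k + 1) := by rw [pow_succ']; omega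

namespace MinorsY

section Exponents

variable {b n : ℕ}

/-- Exponents are indexed from `0`: `u i` is the exponent of `x_{i+1}`. -/
def IsStandard (b : ℕ) (u : Fin n → ℕ) : Prop :=
  ∀ i j : Fin n, (i : ℕ) + 2 ≤ j → b ≤ u i → u j = 0

def weight (b : ℕ) (u : Fin n → ℕ) : ℕ := ∑ i, u i * rep b i

lemma weight_eq_mul_weight_tail_add (u : Fin (n + 1) → ℕ) :
    weight b u = b * weight b (Fin.tail u) + ∑ i, Fin.tail u i := by
  simp only [weight, Fin.sum_univ_succ, Fin.val_zero, rep_zero, mul_zero, zero_add, Fin.val_succ,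
    rep_succ, Finset.mul_sum, ← Finset.sum_add_distrib, Fin.tail]
  exact Finset.sum_congr rfl fun i _ => by ring

lemma IsStandard.tail {u : Fin (n + 1) → ℕ} (hu : IsStandard b u) :
    IsStandard b (Fin.tail u) :=
  fun i j hij => hu i.succ j.succ (by simpa using hij)

lemma IsStandard.head_lt {u : Fin (n + 1) → ℕ} (hu : IsStandard b u)
    (h : weight b (Fin.tail u) ≠ 0) : u 0 < b := by
  obtain ⟨i, -, hi⟩ := Finset.exists_ne_zero_of_sum_ne_zero h
  have hi0 : (i : ℕ) ≠ 0 := fun h0 => hi (by rw [h0, rep_zero, mul_zero])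
  by_contra! hb
  exact left_ne_zero_of_mul hi (hu 0 i.succ (by simp; omega) hb)

lemma IsStandard.weight_le_sum_iff {u : Fin (n + 1) → ℕ} (hu : IsStandard b u) :
    weight b u ≤ ∑ i, u i ↔ weight b (Fin.tail u) = 0 := by
  rw [weight_eq_mul_weight_tail_add, Fin.sum_univ_succ]
  refine ⟨fun hle => ?_, fun h => by simp [h, Fin.tail]⟩
  by_contra h
  have := Nat.le_mul_of_pos_right b (Nat.pos_of_ne_zero h)
  have := hu.head_lt h
  simp only [Fin.tail] at hle
  omega

theorem IsStandard.eq_of_sum_eq_of_weight_eq :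
    ∀ {n : ℕ} {u v : Fin n → ℕ}, IsStandard b u → IsStandard b v →
      ∑ i, u i = ∑ i, v i → weight b u = weight b v → u = v
  | 0, u, v, _, _, _, _ => Subsingleton.elim u v
  | n + 1, u, v, hu, hv, hsum, hweight => by
    have hu' := weight_eq_mul_weight_tail_add (b := b) u
    have hv' := weight_eq_mul_weight_tail_add (b := b) v
    have hsum' := hsum
    simp only [Fin.sum_univ_succ] at hsum'
    simp only [Fin.tail] at hu' hv'
    have hhead : u 0 = v 0 ∧ weight b (Fin.tail u) = weight b (Fin.tail v) := by
      by_cases hle : weight b u ≤ ∑ i, u i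
      · have hu0 := hu.weight_le_sum_iff.1 hle
        have hv0 := hv.weight_le_sum_iff.1 (hweight ▸ hsum ▸ hle)
        rw [hu0, mul_zero] at hu'
        rw [hv0, mul_zero] at hv'
        omega
      · have hu0 := hu.head_lt (mt hu.weight_le_sum_iff.2 hle)
        have hv0 := hv.head_lt (mt hv.weight_le_sum_iff.2 (hweight ▸ hsum ▸ hle))
        have hmod : b * weight b (Fin.tail u) + v 0 = b * weight b (Fin.tail v) + u 0 := by
          omega
        have h0 : v 0 = u 0 := by
          simpa [Nat.mod_eq_of_lt hu0, Nat.mod_eq_of_lt hv0] using congrArg (· % b) hmod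
        exact ⟨h0.symm, Nat.eq_of_mul_eq_mul_left (show 0 < b by omega) (by omega)⟩
    have htail := IsStandard.eq_of_sum_eq_of_weight_eq hu.tail hv.tail
      (by simp only [Fin.tail]; omega) hhead.2
    rw [← Fin.cons_self_tail u, ← Fin.cons_self_tail v, hhead.1, htail]

end Exponents

section Polynomials

variable {K : Type*} [Field K] {b n : ℕ}

noncomputable def paramHom (b n : ℕ) (K : Type*) [Field K] :
    MvPolynomial (Fin n) K →ₐ[K] MvPolynomial (Fin 2) K :=
  aeval fun i => X 0 * X 1 ^ rep b i

noncomputable def paramExp (b : ℕ) (u : Fin n →₀ ℕ) : Fin 2 →₀ ℕ :=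
  Finsupp.single 0 (∑ i, u i) + Finsupp.single 1 (weight b u)

lemma paramHom_monomial (u : Fin n →₀ ℕ) (c : K) :
    paramHom b n K (monomial u c) = monomial (paramExp b u) c := by
  rw [paramHom, aeval_monomial, Finsupp.prod_fintype _ _ fun _ => pow_zero _]
  simp only [mul_pow, ← pow_mul, Finset.prod_mul_distrib, Finset.prod_pow_eq_pow_sum]
  rw [paramExp, monomial_add_single, ← C_mul_X_pow_eq_monomial, algebraMap_eq, weight]
  simp only [mul_comm (rep b _)]
  ring

lemma paramHom_xv {m : ℕ} (hm1 : 1 ≤ m) (hm2 : m ≤ n) :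
    paramHom b n K (xv K n m) = X 0 * X 1 ^ rep b (m - 1) := by
  obtain ⟨i, rfl⟩ := Nat.exists_eq_add_of_le' hm1
  simp [xv_succ (⟨i, by omega⟩ : Fin n), paramHom]

lemma paramHom_minor {f : MvPolynomial (Fin n) K} (hf : f ∈ minorsY K b n) :
    paramHom b n K f = 0 := by
  obtain ⟨j, l, hj, hjl, hl, rfl⟩ := hf
  obtain ⟨j, rfl⟩ : ∃ j', j = j' + 1 := ⟨j - 1, by omega⟩
  obtain ⟨l, rfl⟩ : ∃ l', l = l' + 1 := ⟨l - 1, by omega⟩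
  rw [map_sub, map_mul, map_mul, map_pow, map_pow,
    paramHom_xv (m := j + 1 + 1) (by omega) (by omega),
    paramHom_xv (m := l + 1) (by omega) (by omega),
    paramHom_xv (m := j + 1) (by omega) (by omega),
    paramHom_xv (m := l + 1 + 1) (by omega) (by omega)]
  simp only [Nat.add_sub_cancel, rep_succ]
  ring

lemma paramExp_injOn : Set.InjOn (paramExp (n := n) b) {u | IsStandard b u} := by
  intro u hu v hv h
  refine DFunLike.coe_injective (IsStandard.eq_of_sum_eq_of_weight_eq hu hv ?_ ?_)
  · simpa [paramExp] using congr($h 0)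
  · simpa [paramExp] using congr($h 1)

noncomputable def standardPolys (b n : ℕ) (K : Type*) [Field K] :
    Submodule K (MvPolynomial (Fin n) K) :=
  restrictSupport K {u | IsStandard b u}

lemma coeff_paramExp_paramHom {g : MvPolynomial (Fin n) K} (hg : g ∈ standardPolys b n K)
    {u : Fin n →₀ ℕ} (hu : u ∈ g.support) :
    coeff (paramExp b u) (paramHom b n K g) = coeff u g := by
  conv_lhs => rw [← support_sum_monomial_coeff g]
  simp only [map_sum, paramHom_monomial, coeff_sum, coeff_monomial]
  refine (Finset.sum_eq_single u ?_ fun h => (h hu).elim).trans (if_pos rfl)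
  exact fun v hv hvu => if_neg ((paramExp_injOn (hg hv) (hg hu)).mt hvu)

lemma eq_zero_of_paramHom_eq_zero {g : MvPolynomial (Fin n) K} (hg : g ∈ standardPolys b n K)
    (h : paramHom b n K g = 0) : g = 0 := by
  ext u
  by_cases hu : u ∈ g.support
  · rw [← coeff_paramExp_paramHom hg hu, h, coeff_zero, coeff_zero]
  · simpa using hu

lemma minor_mem_span {i i' k k' : Fin n} (hi' : (i' : ℕ) = i + 1) (hk' : (k' : ℕ) = k + 1)
    (hik : i < k) :
    X i ^ b * X k' - X i' * X k ^ b ∈ Ideal.span (minorsY K b n) := by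
  have hmem : xv K n (i' + 1) * xv K n (k + 1) ^ b - xv K n (i + 1) ^ b * xv K n (k' + 1)
      ∈ minorsY K b n :=
    ⟨i + 1, k + 1, by omega, by omega, by omega, by rw [hi', hk']⟩
  simp only [xv_succ] at hmem
  rw [← neg_sub]
  exact neg_mem (Ideal.subset_span hmem)

/-- The weights `(b + 2) ^ i` are chosen so that the straightening step
`x_i^b·x_j ↦ x_{i+1}·x_{j-1}^b` lowers the weight of the exponent. -/
lemma exists_lt_monomial_sub_mem_span_of_not_isStandard {u : Fin n →₀ ℕ}
    (hu : ¬IsStandard b u) :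
    ∃ u' : Fin n →₀ ℕ, Finsupp.weight (fun i : Fin n => (b + 2) ^ (i : ℕ)) u'
        < Finsupp.weight (fun i : Fin n => (b + 2) ^ (i : ℕ)) u ∧
      monomial u (1 : K) - monomial u' 1 ∈ Ideal.span (minorsY K b n) := by
  obtain ⟨i, j, hij, hbi, hj⟩ :
      ∃ i j : Fin n, (i : ℕ) + 2 ≤ j ∧ b ≤ u i ∧ u j ≠ 0 := by
    simpa [IsStandard] using hu
  set i' : Fin n := ⟨i + 1, by omega⟩
  set k : Fin n := ⟨j - 1, by omega⟩
  have hjk : (j : ℕ) = k + 1 := by simp only [k]; omega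
  have hik : i < k := by simp only [k, Fin.lt_def]; omega
  set d := Finsupp.single i b + Finsupp.single j 1
  set d' := Finsupp.single i' 1 + Finsupp.single k b
  have hd : d ≤ u := by
    intro t
    have : i ≠ j := fun h => by rw [h] at hij; omega
    simp only [d, Finsupp.add_apply, Finsupp.single_apply]
    split_ifs <;> subst_vars <;> omega
  set w := u - d
  have hu : u = w + d := (tsub_add_cancel_of_le hd).symm
  refine ⟨w + d', ?_, ?_⟩
  · rw [hu]
    simp only [d, d', map_add, Finsupp.weight_single, smul_eq_mul, one_mul, hjk]
    exact Nat.add_lt_add_left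
      (pow_add_mul_pow_lt_mul_pow_add_pow (B := b + 2) (b := b) (by omega) hik) _
  · have := minor_mem_span (K := K) (b := b) (i' := i') (k' := j) rfl hjk hik
    convert Ideal.mul_mem_left _ (monomial w (1 : K)) this using 1
    rw [hu, X_pow_eq_monomial, X_pow_eq_monomial]
    simp only [X, monomial_mul, mul_sub, d, d', one_mul]

lemma monomial_mem_sup_standardPolys (u : Fin n →₀ ℕ) :
    monomial u (1 : K) ∈
      (Ideal.span (minorsY K b n)).restrictScalars K ⊔ standardPolys b n K := by
  induction h : Finsupp.weight (fun i : Fin n => (b + 2) ^ (i : ℕ)) u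
    using Nat.strong_induction_on generalizing u with
  | _ N ih =>
  by_cases hu : IsStandard b u
  · exact Submodule.mem_sup_right (by simpa [standardPolys] using hu)
  obtain ⟨u', hlt, hdiff⟩ := exists_lt_monomial_sub_mem_span_of_not_isStandard (K := K) hu
  rw [← sub_add_cancel (monomial u (1 : K)) (monomial u' 1)]
  exact Submodule.add_mem _ (Submodule.mem_sup_left hdiff) (ih _ (h ▸ hlt) u' rfl)

lemma sup_standardPolys_eq_top :
    (Ideal.span (minorsY K b n)).restrictScalars K ⊔ standardPolys b n K = ⊤ := by
  refine Submodule.eq_top_iff'.2 fun f => ?_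
  induction f using MvPolynomial.induction_on' with
  | monomial u c =>
    simpa [smul_monomial] using Submodule.smul_mem _ c (monomial_mem_sup_standardPolys u)
  | add p q hp hq => exact Submodule.add_mem _ hp hq

theorem span_minorsY_eq_ker : Ideal.span (minorsY K b n) = RingHom.ker (paramHom b n K) := by
  have hle : Ideal.span (minorsY K b n) ≤ RingHom.ker (paramHom b n K) :=
    Ideal.span_le.2 fun f hf => paramHom_minor hf
  refine le_antisymm hle fun f hf => ?_
  obtain ⟨g, hg, h, hh, rfl⟩ :=
    Submodule.mem_sup.1 (sup_standardPolys_eq_top.ge (Submodule.mem_top (x := f)))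
  have hh0 : paramHom b n K h = 0 := by
    simpa [RingHom.mem_ker.1 (hle hg)] using RingHom.mem_ker.1 hf
  rwa [eq_zero_of_paramHom_eq_zero hh hh0, add_zero]

theorem isPrime_span_minorsY : (Ideal.span (minorsY K b n)).IsPrime := by
  rw [span_minorsY_eq_ker]
  exact RingHom.ker_isPrime _

lemma xv_notMem_span_minorsY {m : ℕ} (hm1 : 1 ≤ m) (hm2 : m ≤ n) :
    xv K n m ∉ Ideal.span (minorsY K b n) := by
  rw [span_minorsY_eq_ker, RingHom.mem_ker, paramHom_xv hm1 hm2]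
  exact mul_ne_zero (X_ne_zero _) (pow_ne_zero _ (X_ne_zero _))

end Polynomials

end MinorsY

theorem stmt11_general (b n : ℕ) (K : Type*) [Field K]
    (m : ℕ) (hm1 : 1 ≤ m) (hm2 : m ≤ n) (e : ℕ) (f : MvPolynomial (Fin n) K)
    (h : xv K n m ^ e * f ∈ Ideal.span (minorsY K b n)) :
    f ∈ Ideal.span (minorsY K b n) := by
  have hprime := MinorsY.isPrime_span_minorsY (K := K) (b := b) (n := n)
  refine (hprime.mem_or_mem h).resolve_left fun hx => ?_
  exact MinorsY.xv_notMem_span_minorsY hm1 hm2 (hprime.mem_of_pow_mem e hx)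

theorem stmt11 (a b n : ℕ) (ha : 0 < a) (hb : 0 < b) (hn : 3 < n) (K : Type*) [Field K]
    (m : ℕ) (hm1 : 1 ≤ m) (hm2 : m ≤ n) (e : ℕ) (f : MvPolynomial (Fin n) K)
    (h : xv K n m ^ e * f ∈ Ideal.span (minorsY K b n)) :
    f ∈ Ideal.span (minorsY K b n) :=
  stmt11_general b n K m hm1 hm2 e f h
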